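/- Let t be a real number with 0 < t ≤ 2/(n+1) and let s ∈ ℝ. Then the homology class [y_n] ∈ H(C∞, ∂) lies in the image of the map H(C_{t,s}, ∂) → H(C∞, ∂) induced by the inclusion C_{t,s} ⊆ C∞ if and only if s ≥ nt/2. (This is the algebraic content of the first regime of Theorem C of the paper, where Υ_{T_{2,3;n,1}}(t) = −nt for t ≤ 2/(1+n).) -/

import Mathlib

/-!
If `s < nt/2`, the line bounding `C_{t,s}` passes strictly below the generators `y_n` and
`y'_k` (here `t ≤ 2/(n+1)` is what excludes every `y'_k`), so a cycle `v ∈ C_{t,s}`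
homologous to `y_n`, say `y_n - v = ∂ξ`, forces `∂ξ` to vanish at every `y'_k` and to be `1`
at `y_n`. The Maslov grading and the filtration leave as the only sources of `y'_k` the
generators `x'_j` with `j ≥ k` and, for `k = 1`, also `x_n`; each of them hits its own `y'`
vertically with coefficient `1`. Descending induction on `j` kills the coefficients of `ξ` at
all `x'_j` and then at `x_n`, the only possible source of `y_n`, a contradiction. Conversely,
`y_n` is itself a cycle, and it lies in `C_{t,s}` exactly when `s ≥ nt/2`.
-/

/-- The labels of the `F[U,U⁻¹]`-basis `S` of `CFK^∞(T_{2,3;n,1})`. -/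
inductive Gen : Type
  | x (k : ℕ) | x' (k : ℕ) | y (k : ℕ) | y' (k : ℕ) | z (k : ℕ) | w (k : ℕ)
  deriving DecidableEq

/-- The validity predicate carving out the basis set `S` for a given `n`:
`S = {y_n, x_n, y'_1} ∪ {x'_k, y'_k : 2 ≤ k ≤ n} ∪ {x_k, z_k : 2 ≤ k ≤ n−1} ∪ {y_k, w_k : 1 ≤ k ≤ n−1}`,
where we encode `x_n` as `.x n`, `y_n` as `.y n` and `y'_1` as `.y' 1`. -/
def Gen.Valid (n : ℕ) : Gen → Prop
  | .x k => 2 ≤ k ∧ k ≤ n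
  | .x' k => 2 ≤ k ∧ k ≤ n
  | .y k => 1 ≤ k ∧ k ≤ n
  | .y' k => 1 ≤ k ∧ k ≤ n
  | .z k => 2 ≤ k ∧ k ≤ n - 1
  | .w k => 1 ≤ k ∧ k ≤ n - 1

/-- The algebraic filtration `A₁` on `S`. -/
def Gen.A1 : Gen → ℤ
  | .x _ => 1
  | .x' k => (k : ℤ)
  | .y _ => 0
  | .y' k => (k : ℤ)
  | .z _ => 1
  | .w _ => 0

/-- The Alexander filtration `A₂` on `S`. -/
def Gen.A2 : Gen → ℤ
  | .x k => (k : ℤ)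
  | .x' _ => 1
  | .y k => (k : ℤ)
  | .y' _ => 0
  | .z _ => 1
  | .w _ => 0

/-- The Maslov grading `M` on `S`. -/
def Gen.M : Gen → ℤ
  | .x _ => 1
  | .x' _ => 1
  | .y _ => 0
  | .y' _ => 0
  | .z _ => 0
  | .w _ => -1

/-- The vertical differential `∂_V` on the basis `S`:
`∂_V x_n = y'_1`, `∂_V x_k = z_k` (`2 ≤ k ≤ n−1`), `∂_V x'_k = y'_k` (`2 ≤ k ≤ n`),
`∂_V y_k = w_k` (`1 ≤ k ≤ n−1`), and `∂_V σ = 0` otherwise. -/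
def Gen.dV (n : ℕ) : Gen → Option Gen
  | .x k => if k = n then some (.y' 1) else some (.z k)
  | .x' k => some (.y' k)
  | .y k => if k = n then none else some (.w k)
  | _ => none

/-- The basis set `S`. -/
abbrev SGen (n : ℕ) := {g : Gen // g.Valid n}

/-- `C^∞` as an `F = ℤ/2`-vector space with basis `{U^m σ : m ∈ ℤ, σ ∈ S}`;
the pair `(m, σ)` encodes the basis vector `U^m σ`, whose bifiltration is
`(A₁ σ − m, A₂ σ − m)` and whose Maslov grading is `M σ − 2m`.  (The value of a
finitely supported function at `(m, σ)` is the coefficient of `U^m σ`.) -/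
abbrev Cinf (n : ℕ) := (ℤ × SGen n) →₀ ZMod 2

/-- The basis vector `U^m σ` of `C^∞`. -/
noncomputable def gen (n : ℕ) (m : ℤ) (σ : SGen n) : Cinf n :=
  Finsupp.single (m, σ) 1

theorem Finsupp.apply_eq_zero_of_mem_span_single {α β R : Type*} [Semiring R]
    {P : α → β → Prop} {v : (α × β) →₀ R}
    (hv : v ∈ Submodule.span R {u | ∃ a b, P a b ∧ u = Finsupp.single (a, b) 1})
    {a : α} {b : β} (h : ¬ P a b) : v (a, b) = 0 := by
  have hle : Submodule.span R {u | ∃ a b, P a b ∧ u = Finsupp.single (a, b) (1 : R)} ≤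
      Finsupp.supported R R {p : α × β | P p.1 p.2} := by
    rw [Submodule.span_le]
    rintro _ ⟨a, b, hab, rfl⟩
    exact Finsupp.single_mem_supported R 1 hab
  exact (Finsupp.mem_supported' R v).1 (hle hv) (a, b) h

theorem LinearMap.finsupp_apply_eq_of_forall_ne {α β R : Type*} [Semiring R]
    (f : (α →₀ R) →ₗ[R] (β →₀ R)) (ξ : α →₀ R) (p : β) (q₀ : α)
    (h : ∀ q ≠ q₀, f (Finsupp.single q 1) p ≠ 0 → ξ q = 0) :
    f ξ p = ξ q₀ * f (Finsupp.single q₀ 1) p := by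
  have hξ : f ξ p = ξ.sum fun q c => c * f (Finsupp.single q 1) p := by
    conv_lhs => rw [← Finsupp.sum_single ξ]
    simp only [Finsupp.sum, map_sum, Finsupp.finsetSum_apply]
    refine Finset.sum_congr rfl fun q _ => ?_
    rw [← Finsupp.smul_single_one, map_smul, Finsupp.smul_apply, smul_eq_mul]
  rw [hξ, Finsupp.sum_eq_single q₀ (fun q _ hq => ?_) (by simp)]
  by_cases hf : f (Finsupp.single q 1) p = 0
  · rw [hf, mul_zero]
  · rw [h q hq hf, zero_mul]

theorem le_two_div_mul_iff {a t s : ℝ} (ht : 0 < t) : a ≤ 2 / t * s ↔ a * t / 2 ≤ s := by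
  rw [div_mul_eq_mul_div, le_div_iff₀ ht, div_le_iff₀ two_pos]
  constructor <;> intro h <;> linarith

theorem two_div_mul_add_neg {a t s j : ℝ} (ha : 0 ≤ a) (ht0 : 0 < t) (ht1 : t ≤ 2 / (a + 1))
    (hs : s < a * t / 2) (hj : 1 ≤ j) : 2 / t * s + (1 - 2 / t) * j < 0 := by
  have hslope : a + 1 ≤ 2 / t := by
    rw [le_div_iff₀ ht0]
    rwa [le_div_iff₀ (by linarith), mul_comm] at ht1
  have hs' : 2 / t * s < a := not_le.1 fun h => ((le_two_div_mul_iff ht0).1 h).not_gt hs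
  nlinarith

structure IsCFKDifferential (n : ℕ) (d : Cinf n →ₗ[ZMod 2] Cinf n) : Prop where
  shift : ∀ (m : ℤ) (σ : SGen n) (m' : ℤ) (σ' : SGen n),
    d (gen n m σ) (m', σ') = d (gen n (m + 1) σ) (m' + 1, σ')
  maslov : ∀ (m : ℤ) (σ : SGen n) (m' : ℤ) (σ' : SGen n),
    d (gen n m σ) (m', σ') ≠ 0 → σ'.1.M - 2 * m' = σ.1.M - 2 * m - 1
  filtered : ∀ (m : ℤ) (σ : SGen n) (m' : ℤ) (σ' : SGen n),
    d (gen n m σ) (m', σ') ≠ 0 →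
      σ'.1.A1 - m' ≤ σ.1.A1 - m ∧ σ'.1.A2 - m' ≤ σ.1.A2 - m ∧
        ¬(σ'.1.A1 - m' = σ.1.A1 - m ∧ σ'.1.A2 - m' = σ.1.A2 - m)
  vertical : ∀ (σ : SGen n) (m' : ℤ) (σ' : SGen n),
    σ'.1.A1 - m' = σ.1.A1 →
      d (gen n 0 σ) (m', σ') = if σ.1.dV n = some σ'.1 ∧ m' = 0 then 1 else 0

namespace IsCFKDifferential

variable {n : ℕ} {d : Cinf n →ₗ[ZMod 2] Cinf n}

theorem coeff_eq_coeff_sub (hd : IsCFKDifferential n d) (m : ℤ) (σ : SGen n) (m' : ℤ)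
    (σ' : SGen n) : d (gen n m σ) (m', σ') = d (gen n 0 σ) (m' - m, σ') := by
  induction m using Int.induction_on generalizing m' with
  | zero => rw [sub_zero]
  | succ i ih => rw [← sub_add_cancel m' 1, ← hd.shift, ih, sub_add_cancel]; ring_nf
  | pred i ih => rw [hd.shift, sub_add_cancel, ih]; ring_nf

theorem coeff_of_A1_eq (hd : IsCFKDifferential n d) {m m' : ℤ} {σ σ' : SGen n}
    (h : σ'.1.A1 - m' = σ.1.A1 - m) :
    d (gen n m σ) (m', σ') = if σ.1.dV n = some σ'.1 ∧ m' = m then 1 else 0 := by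
  rw [hd.coeff_eq_coeff_sub, hd.vertical σ (m' - m) σ' (by omega)]
  exact if_congr (and_congr_right fun _ => sub_eq_zero) rfl rfl

theorem source_of_coeff_y'_ne_zero (hd : IsCFKDifferential n d) {m : ℤ} {g : Gen}
    (hg : g.Valid n) {k : ℕ} (hk : (Gen.y' k).Valid n)
    (hne : d (gen n m ⟨g, hg⟩) (0, ⟨.y' k, hk⟩) ≠ 0) :
    m = 0 ∧ ((∃ j, k ≤ j ∧ g = .x' j) ∨ (k = 1 ∧ g = .x n)) := by
  have := hk.1
  have hm := hd.maslov _ _ _ _ hne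
  have hf := hd.filtered _ _ _ _ hne
  cases g with
  | x j =>
    simp only [Gen.M, Gen.A1, Gen.A2] at hm hf
    obtain rfl : m = 0 := by omega
    obtain rfl : k = 1 := by omega
    rw [hd.coeff_of_A1_eq (by simp [Gen.A1])] at hne
    by_cases hj : j = n
    · exact ⟨rfl, .inr ⟨rfl, hj ▸ rfl⟩⟩
    · simp [Gen.dV, hj] at hne
  | x' j =>
    simp only [Gen.M, Gen.A1, Gen.A2] at hm hf
    exact ⟨by omega, .inl ⟨j, by omega, rfl⟩⟩
  | w j =>
    simp only [Gen.M, Gen.A1, Gen.A2] at hm hf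
    obtain rfl : m = -1 := by omega
    obtain rfl : k = 1 := by omega
    rw [hd.coeff_of_A1_eq (by simp [Gen.A1])] at hne
    simp [Gen.dV] at hne
  | y j | y' j | z j => simp only [Gen.M] at hm; omega

theorem source_of_coeff_y_ne_zero (hd : IsCFKDifferential n d) {m : ℤ} {g : Gen}
    (hg : g.Valid n) (hy : (Gen.y n).Valid n)
    (hne : d (gen n m ⟨g, hg⟩) (0, ⟨.y n, hy⟩) ≠ 0) : m = 0 ∧ g = .x n := by
  have hm := hd.maslov _ _ _ _ hne
  have hf := hd.filtered _ _ _ _ hne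
  cases g with
  | x j =>
    simp only [Gen.Valid, Gen.M, Gen.A1, Gen.A2] at hg hm hf
    exact ⟨by omega, by congr 1; omega⟩
  | x' j | w j => simp only [Gen.Valid, Gen.M, Gen.A1, Gen.A2] at hg hy hm hf; omega
  | y j | y' j | z j => simp only [Gen.M] at hm; omega

theorem d_gen_y_eq_zero (hd : IsCFKDifferential n d) (hy : (Gen.y n).Valid n) :
    d (gen n 0 ⟨.y n, hy⟩) = 0 := by
  ext ⟨m', g, hg⟩
  by_contra hne
  have hm := hd.maslov _ _ _ _ hne
  have hf := hd.filtered _ _ _ _ hne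
  cases g with
  | x j | w j =>
    simp only [Gen.M] at hm
    rw [hd.coeff_of_A1_eq (by simp [Gen.A1]; omega)] at hne
    simp [Gen.dV] at hne
  | x' j =>
    simp only [Gen.M, Gen.A1, Gen.A2] at hm hf
    have := hg.1
    omega
  | y j | y' j | z j => simp only [Gen.M] at hm; omega

theorem apply_x'_eq_zero (hd : IsCFKDifferential n d) {ξ : Cinf n}
    (hξ : ∀ k (hk : (Gen.y' k).Valid n), d ξ (0, ⟨.y' k, hk⟩) = 0)
    (k : ℕ) (hk : (Gen.x' k).Valid n) : ξ (0, ⟨.x' k, hk⟩) = 0 := by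
  induction hN : n - k using Nat.strong_induction_on generalizing k with
  | _ N ih =>
    have hk' : (Gen.y' k).Valid n := ⟨by have := hk.1; omega, hk.2⟩
    have hvert : d (gen n 0 ⟨.x' k, hk⟩) (0, ⟨.y' k, hk'⟩) = 1 := by
      rw [hd.coeff_of_A1_eq (by simp [Gen.A1])]; simp [Gen.dV]
    calc ξ (0, ⟨.x' k, hk⟩) = ξ (0, ⟨.x' k, hk⟩) * d (gen n 0 ⟨.x' k, hk⟩) (0, ⟨.y' k, hk'⟩) := by
          rw [hvert, mul_one]
      _ = d ξ (0, ⟨.y' k, hk'⟩) := (d.finsupp_apply_eq_of_forall_ne ξ _ _ ?_).symm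
      _ = 0 := hξ k hk'
    rintro ⟨m, g, hg⟩ hq hne
    obtain ⟨rfl, ⟨j, hkj, rfl⟩ | ⟨rfl, -⟩⟩ := hd.source_of_coeff_y'_ne_zero hg hk' hne
    · have hlt : k < j := lt_of_le_of_ne hkj fun h => hq (by subst h; rfl)
      exact ih (n - j) (by have := hg.2; omega) j hg rfl
    · have := hk.1; omega

theorem apply_x_eq_zero (hd : IsCFKDifferential n d) {ξ : Cinf n}
    (hξ : ∀ k (hk : (Gen.y' k).Valid n), d ξ (0, ⟨.y' k, hk⟩) = 0)
    (hx : (Gen.x n).Valid n) : ξ (0, ⟨.x n, hx⟩) = 0 := by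
  have h1 : (Gen.y' 1).Valid n := ⟨le_rfl, by have := hx.1; omega⟩
  have hvert : d (gen n 0 ⟨.x n, hx⟩) (0, ⟨.y' 1, h1⟩) = 1 := by
    rw [hd.coeff_of_A1_eq (by simp [Gen.A1])]; simp [Gen.dV]
  calc ξ (0, ⟨.x n, hx⟩) = ξ (0, ⟨.x n, hx⟩) * d (gen n 0 ⟨.x n, hx⟩) (0, ⟨.y' 1, h1⟩) := by
        rw [hvert, mul_one]
    _ = d ξ (0, ⟨.y' 1, h1⟩) := (d.finsupp_apply_eq_of_forall_ne ξ _ _ ?_).symm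
    _ = 0 := hξ 1 h1
  rintro ⟨m, g, hg⟩ hq hne
  obtain ⟨rfl, ⟨j, -, rfl⟩ | ⟨-, rfl⟩⟩ := hd.source_of_coeff_y'_ne_zero hg h1 hne
  · exact hd.apply_x'_eq_zero hξ j hg
  · exact absurd rfl hq

theorem d_apply_y_eq_zero (hd : IsCFKDifferential n d) {ξ : Cinf n}
    (hξ : ∀ k (hk : (Gen.y' k).Valid n), d ξ (0, ⟨.y' k, hk⟩) = 0)
    (hy : (Gen.y n).Valid n) (hx : (Gen.x n).Valid n) : d ξ (0, ⟨.y n, hy⟩) = 0 := by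
  rw [d.finsupp_apply_eq_of_forall_ne ξ _ (0, ⟨.x n, hx⟩), hd.apply_x_eq_zero hξ hx, zero_mul]
  rintro ⟨m, g, hg⟩ hq hne
  obtain ⟨rfl, rfl⟩ := hd.source_of_coeff_y_ne_zero hg hy hne
  exact absurd rfl hq

end IsCFKDifferential

theorem statement_8 (n : ℕ) (hn : 2 ≤ n)
    (d : Cinf n →ₗ[ZMod 2] Cinf n)
    -- F[U,U⁻¹]-linearity: ∂ commutes with multiplication by U (the shift (m,σ) ↦ (m+1,σ))
    (hU : ∀ (m : ℤ) (σ : SGen n) (m' : ℤ) (σ' : SGen n),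
      d (gen n m σ) (m', σ') = d (gen n (m + 1) σ) (m' + 1, σ'))
    -- (ii) ∂ is homogeneous of Maslov degree −1
    (hM : ∀ (m : ℤ) (σ : SGen n) (m' : ℤ) (σ' : SGen n),
      d (gen n m σ) (m', σ') ≠ 0 → σ'.1.M - 2 * m' = σ.1.M - 2 * m - 1)
    -- (iii) ∂ strictly drops the bifiltration
    (hF : ∀ (m : ℤ) (σ : SGen n) (m' : ℤ) (σ' : SGen n),
      d (gen n m σ) (m', σ') ≠ 0 →
        σ'.1.A1 - m' ≤ σ.1.A1 - m ∧ σ'.1.A2 - m' ≤ σ.1.A2 - m ∧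
          ¬(σ'.1.A1 - m' = σ.1.A1 - m ∧ σ'.1.A2 - m' = σ.1.A2 - m))
    -- (iv) the vertical components of ∂ (equal algebraic filtration) are exactly ∂_V
    (hV : ∀ (σ : SGen n) (m' : ℤ) (σ' : SGen n),
      σ'.1.A1 - m' = σ.1.A1 →
        d (gen n 0 σ) (m', σ') = if σ.1.dV n = some σ'.1 ∧ m' = 0 then 1 else 0)
    (t s : ℝ) (ht0 : 0 < t) (ht1 : t ≤ 2 / ((n : ℝ) + 1)) :
    -- [y_n] is in the image of H(C_{t,s}) → H(C∞) iff s ≥ nt/2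
    (∃ v ∈ Submodule.span (ZMod 2)
        {u : Cinf n | ∃ (m : ℤ) (σ : SGen n), ((σ.1.A2 - m : ℤ) : ℝ) ≤ (2 / t) * s + (1 - 2 / t) * ((σ.1.A1 - m : ℤ) : ℝ) ∧ u = gen n m σ},
        d v = 0 ∧ ∃ ξ : Cinf n, gen n 0 ⟨Gen.y n, by omega, le_rfl⟩ - v = d ξ) ↔
      (n : ℝ) * t / 2 ≤ s := by
  have hd : IsCFKDifferential n d := ⟨hU, hM, hF, hV⟩
  have hx : (Gen.x n).Valid n := ⟨hn, le_rfl⟩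
  have hy : (Gen.y n).Valid n := ⟨by omega, le_rfl⟩
  constructor
  · rintro ⟨v, hv, -, ξ, hξ⟩
    by_contra! hs
    have hdξ : ∀ p, d ξ p = gen n 0 ⟨.y n, hy⟩ p - v p := fun p => by rw [← hξ, Finsupp.sub_apply]
    have hv_y' : ∀ k (hk : (Gen.y' k).Valid n), v (0, ⟨.y' k, hk⟩) = 0 := fun k hk =>
      Finsupp.apply_eq_zero_of_mem_span_single hv <| not_le.2 <| by
        push_cast
        simpa [Gen.A1, Gen.A2] using two_div_mul_add_neg (Nat.cast_nonneg n) ht0 ht1 hs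
          (Nat.one_le_cast.2 hk.1)
    have hv_y : v (0, ⟨.y n, hy⟩) = 0 :=
      Finsupp.apply_eq_zero_of_mem_span_single hv <| by
        simpa [Gen.A1, Gen.A2, le_two_div_mul_iff ht0] using hs
    have hdξ_y := hd.d_apply_y_eq_zero (fun k hk => by rw [hdξ, hv_y', sub_zero]; simp [gen]) hy hx
    simp [hdξ, hv_y, gen] at hdξ_y
  · intro hs
    refine ⟨gen n 0 ⟨.y n, hy⟩, Submodule.subset_span ⟨0, _, ?_, rfl⟩, hd.d_gen_y_eq_zero hy, 0,
      by rw [sub_self, map_zero]⟩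
    simpa [Gen.A1, Gen.A2, le_two_div_mul_iff ht0] using hs
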